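/- arXiv:2507.15825 — 4 statements merged into one kernel-verified Lean document; each statement's English description precedes it below -/
import Mathlib

section
/- Let X follow a hypergeometric distribution with population size m+n', κ success states, and m draws (κ a non-negative integer with κ ≤ m+n'). Then E[X/(1+κ−X)] ≤ m/(1+n'). -/
/-!
Since `x / (κ + 1 - x) * C(κ, x) = C(κ, x - 1)` on the support, the expectation becomes
`∑ C(κ, x - 1) C(m + n' - κ, m - x) / C(m + n', m)`, a truncated Vandermonde sum. Completing it gives
`C(m + n', m - 1) / C(m + n', m) = m / (n' + 1)`.
-/

open Finset

theorem Nat.sum_range_choose_mul_choose_sub (a b k : ℕ) :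
    ∑ j ∈ range (k + 1), a.choose j * b.choose (k - j) = (a + b).choose k := by
  rw [Nat.add_choose_eq, Finset.Nat.sum_antidiagonal_eq_sum_range_succ_mk]

theorem Nat.cast_choose_div_cast_choose_succ (n k : ℕ) :
    (n.choose k : ℝ) / n.choose (k + 1) = (k + 1) / (n - k : ℕ) := by
  rcases lt_or_ge k n with hkn | hnk
  · have hpos : (0 : ℝ) < n.choose (k + 1) := by exact_mod_cast Nat.choose_pos hkn
    have hsub : (0 : ℝ) < (n - k : ℕ) := by exact_mod_cast Nat.sub_pos_of_lt hkn
    rw [div_eq_div_iff hpos.ne' hsub.ne', mul_comm (k + 1 : ℝ)]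
    exact_mod_cast (Nat.choose_succ_right_eq n k).symm
  · rw [Nat.choose_eq_zero_of_lt (Nat.lt_succ_of_le hnk), Nat.sub_eq_zero_of_le hnk]
    simp

theorem Nat.cast_succ_div_mul_cast_choose_succ {κ x : ℕ} (hx : x < κ) :
    ((x + 1 : ℕ) : ℝ) / (1 + κ - (x + 1 : ℕ)) * κ.choose (x + 1) = κ.choose x := by
  have hsub : (1 + κ - (x + 1 : ℕ) : ℝ) = (κ - x : ℕ) := by
    push_cast [Nat.cast_sub hx.le]
    ring
  have hpos : (0 : ℝ) < (κ - x : ℕ) := by exact_mod_cast Nat.sub_pos_of_lt hx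
  rw [hsub, div_mul_eq_mul_div, div_eq_iff hpos.ne', mul_comm]
  exact_mod_cast Nat.choose_succ_right_eq κ x

theorem hypergeom_ratio_expectation_le_general
    (m n' κ : ℕ) (hκ : κ ≤ m + n') :
    ∑ x ∈ Finset.range (min m κ + 1),
        ((x : ℝ) / (1 + (κ : ℝ) - (x : ℝ))) *
          (((Nat.choose κ x : ℝ) * (Nat.choose (m + n' - κ) (m - x) : ℝ)) /
            (Nat.choose (m + n') m : ℝ))
      ≤ (m : ℝ) / (1 + (n' : ℝ)) := by
  obtain _ | k := m
  · simp
  set N := k + 1 + n'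
  have hvandermonde : ∑ j ∈ range (k + 1), κ.choose j * (N - κ).choose (k - j) = N.choose k := by
    rw [Nat.sum_range_choose_mul_choose_sub, Nat.add_sub_cancel' hκ]
  calc _ = ∑ j ∈ range (min (k + 1) κ),
          (κ.choose j * (N - κ).choose (k - j) : ℝ) / N.choose (k + 1) := by
        rw [sum_range_succ']
        simp only [Nat.cast_zero, zero_div, zero_mul, add_zero]
        refine sum_congr rfl fun j hj => ?_
        have hjκ : j < κ := (mem_range.mp hj).trans_le (min_le_right _ _)
        rw [mul_div_assoc', ← mul_assoc, Nat.cast_succ_div_mul_cast_choose_succ hjκ,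
          Nat.add_sub_add_right]
    _ ≤ ∑ j ∈ range (k + 1), (κ.choose j * (N - κ).choose (k - j) : ℝ) / N.choose (k + 1) :=
        sum_le_sum_of_subset_of_nonneg (range_subset_range.mpr (min_le_left _ _))
          fun _ _ _ => by positivity
    _ = (N.choose k : ℝ) / N.choose (k + 1) := by
        rw [← sum_div]
        exact_mod_cast congrArg (fun s : ℕ => (s : ℝ) / N.choose (k + 1)) hvandermonde
    _ = _ := by
        rw [Nat.cast_choose_div_cast_choose_succ, show N - k = n' + 1 by omega]
        push_cast
        ring

/-- For X ~ Hypergeom(m+n', κ, m), E[X/(1+κ−X)] ≤ m/(1+n'). -/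
theorem hypergeom_ratio_expectation_le
    (m n' κ : ℕ) (hm : 0 < m) (hn : 0 < n') (hκ : κ ≤ m + n') :
    ∑ x ∈ Finset.range (min m κ + 1),
        ((x : ℝ) / (1 + (κ : ℝ) - (x : ℝ))) *
          (((Nat.choose κ x : ℝ) * (Nat.choose (m + n' - κ) (m - x) : ℝ)) /
            (Nat.choose (m + n') m : ℝ))
      ≤ (m : ℝ) / (1 + (n' : ℝ)) :=
  hypergeom_ratio_expectation_le_general m n' κ hκ
end

section
/- Let the conformal p-value for a test point with score s* relative to calibration scores s₁,…,s_n and calibration null indicators b₁,…,b_n ∈ {0,1} be p = (1 + Σᵢ 1{s* ≥ sᵢ, bᵢ = 1})/(n+1). If (s*, s₁,…,s_n) are exchangeable on the event that the test point is null (b* = 1, and all bᵢ = 1 for calibration nulls included in the count), then P(p ≤ t and test point is null) ≤ t for every t ∈ [0,1]. -/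
/-!
Let `R_j` be the rank of point `j` among the null points, counting `j` itself, so that for a null
test point `(n + 1) p = R_{n+1}`, and `p ≤ t` means `R_{n+1} ≤ m := ⌊t (n + 1)⌋`. For every
realisation at most `m` null points have rank `≤ m`: the highest-scoring of them has rank at least
their number. By exchangeability the `n + 1` events "`j` is null and `R_j ≤ m`" are equally
likely, so `(n + 1) P(p ≤ t, test point null) ≤ m ≤ t (n + 1)`.
-/

open MeasureTheory Finset
open scoped ENNReal

theorem Finset.card_filter_rank_le {ι α : Type*} [LinearOrder α] (s : Finset ι) (f : ι → α)
    (m : ℕ) : #{j ∈ s | #{i ∈ s | f i ≤ f j} ≤ m} ≤ m := by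
  set T := {j ∈ s | #{i ∈ s | f i ≤ f j} ≤ m}
  rcases T.eq_empty_or_nonempty with hT | hT
  · simp [hT]
  obtain ⟨j, hjT, hjmax⟩ := T.exists_max_image f hT
  calc #T ≤ #{i ∈ s | f i ≤ f j} :=
        card_le_card fun i hi => mem_filter.2 ⟨(mem_filter.1 hi).1, hjmax i hi⟩
    _ ≤ m := (mem_filter.1 hjT).2

open Classical in
theorem MeasureTheory.sum_measure_le_of_forall_card_le {Ω ι : Type*} [MeasurableSpace Ω]
    [Fintype ι] (μ : Measure Ω) {A : ι → Set Ω} (hA : ∀ j, MeasurableSet (A j)) {m : ℕ}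
    (hcard : ∀ ω, #{j | ω ∈ A j} ≤ m) : ∑ j, μ (A j) ≤ m * μ Set.univ := by
  calc ∑ j, μ (A j) = ∫⁻ ω, ∑ j, (A j).indicator 1 ω ∂μ := by
        rw [lintegral_finsetSum _ fun j _ => measurable_one.indicator (hA j)]
        simp [lintegral_indicator_one (hA _)]
    _ ≤ ∫⁻ _, (m : ℝ≥0∞) ∂μ := lintegral_mono fun ω => by
        simpa [Set.indicator_apply] using (Nat.cast_le (α := ℝ≥0∞)).2 (hcard ω)
    _ = m * μ Set.univ := lintegral_const _

open Classical in
theorem MeasureTheory.card_mul_measure_le_of_exchangeable {Ω ι β : Type*} [MeasurableSpace Ω]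
    [MeasurableSpace β] [Fintype ι] (μ : Measure Ω) [IsProbabilityMeasure μ]
    {W : Ω → ι → β} (hW : Measurable W)
    (hexch : ∀ σ : Equiv.Perm ι, μ.map (fun ω => W ω ∘ σ) = μ.map W)
    {E : ι → Set (ι → β)} (hE : ∀ j, MeasurableSet (E j))
    (hequiv : ∀ (σ : Equiv.Perm ι) j w, w ∘ σ ∈ E j ↔ w ∈ E (σ j))
    {m : ℕ} (hcard : ∀ w, #{j | w ∈ E j} ≤ m) (k : ι) :
    Fintype.card ι * μ (W ⁻¹' E k) ≤ m := by
  have hsame : ∀ j, μ (W ⁻¹' E j) = μ (W ⁻¹' E k) := fun j => by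
    have hσ : Measurable fun ω => W ω ∘ Equiv.swap k j :=
      measurable_pi_lambda _ fun i => (measurable_pi_apply _).comp hW
    have hpre : W ⁻¹' E j = (fun ω => W ω ∘ Equiv.swap k j) ⁻¹' E k := by
      ext ω; simp [hequiv]
    rw [hpre, ← Measure.map_apply hσ (hE k), hexch, Measure.map_apply hW (hE k)]
  calc Fintype.card ι * μ (W ⁻¹' E k) = ∑ j, μ (W ⁻¹' E j) := by simp [hsame]
    _ ≤ m * μ Set.univ :=
        sum_measure_le_of_forall_card_le μ (fun j => hW (hE j)) fun ω => by simpa using hcard (W ω)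
    _ = m := by simp

section NullRank

variable {ι α : Type*} [Fintype ι] [LinearOrder α]

def nullRank (w : ι → α × Bool) (j : ι) : ℕ :=
  #{i | (w i).1 ≤ (w j).1 ∧ (w i).2 = true}

def nullRankAtMost (m : ℕ) (j : ι) : Set (ι → α × Bool) :=
  {w | nullRank w j ≤ m ∧ (w j).2 = true}

theorem nullRank_comp_perm (w : ι → α × Bool) (σ : Equiv.Perm ι) (j : ι) :
    nullRank (w ∘ σ) j = nullRank w (σ j) := by
  simp only [nullRank, Function.comp_apply]
  exact Finset.card_equiv σ (by simp)

theorem comp_perm_mem_nullRankAtMost {m : ℕ} (σ : Equiv.Perm ι) (j : ι) (w : ι → α × Bool) :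
    w ∘ σ ∈ nullRankAtMost m j ↔ w ∈ nullRankAtMost m (σ j) := by
  simp [nullRankAtMost, nullRank_comp_perm]

open Classical in
theorem card_mem_nullRankAtMost_le (m : ℕ) (w : ι → α × Bool) :
    #{j | w ∈ nullRankAtMost m j} ≤ m := by
  have := card_filter_rank_le {i | (w i).2 = true} (fun i => (w i).1) m
  simp only [filter_filter] at this
  convert this using 2
  ext j
  simp [nullRankAtMost, nullRank, and_comm]

end NullRank

theorem measurableSet_nullRankAtMost {ι : Type*} [Fintype ι] (m : ℕ) (j : ι) :
    MeasurableSet (nullRankAtMost (α := ℝ) m j) := by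
  have hcoord (i : ι) : Measurable fun w : ι → ℝ × Bool => w i := measurable_pi_apply i
  have hrank : Measurable fun w : ι → ℝ × Bool => nullRank w j := by
    simp only [nullRank, card_filter]
    refine Finset.measurable_sum _ fun i _ => Measurable.ite ?_ measurable_const measurable_const
    exact (measurableSet_le (hcoord i).fst (hcoord j).fst).inter
      (measurableSet_eq_fun (hcoord i).snd measurable_const)
  exact (hrank measurableSet_Iic).inter
    (measurableSet_eq_fun (hcoord j).snd measurable_const)

theorem nullRank_last {n : ℕ} {α : Type*} [LinearOrder α] (w : Fin (n + 1) → α × Bool)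
    (hnull : (w (Fin.last n)).2 = true) :
    nullRank w (Fin.last n) = #{i : Fin n |
      (w i.castSucc).1 ≤ (w (Fin.last n)).1 ∧ (w i.castSucc).2 = true} + 1 := by
  rw [nullRank, card_filter, card_filter, Fin.sum_univ_castSucc]
  simp [hnull]

theorem ENNReal.le_ofReal_of_natCast_mul_le_floor {N : ℕ} (hN : N ≠ 0) {x : ℝ≥0∞} {t : ℝ}
    (ht : 0 ≤ t) (h : N * x ≤ ⌊t * N⌋₊) : x ≤ ENNReal.ofReal t := by
  have hN' : (N : ℝ≥0∞) ≠ 0 := by exact_mod_cast hN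
  rw [← ENNReal.mul_le_mul_iff_right hN' (ENNReal.natCast_ne_top N)]
  calc (N : ℝ≥0∞) * x ≤ ⌊t * N⌋₊ := h
    _ ≤ ENNReal.ofReal (t * N) := by
        rw [← ENNReal.ofReal_natCast]; exact ENNReal.ofReal_le_ofReal (Nat.floor_le (by positivity))
    _ = N * ENNReal.ofReal t := by
        rw [ENNReal.ofReal_mul ht, ENNReal.ofReal_natCast, mul_comm]

theorem natCast_div_le_iff_le_floor {k N : ℕ} (hN : 0 < N) {t : ℝ} (ht : 0 ≤ t) :
    (k : ℝ) / N ≤ t ↔ k ≤ ⌊t * N⌋₊ := by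
  rw [div_le_iff₀ (by exact_mod_cast hN), Nat.le_floor_iff (by positivity)]

theorem mem_nullRankAtMost_last_iff {n : ℕ} (w : Fin (n + 1) → ℝ × Bool) {t : ℝ} (ht : 0 ≤ t) :
    w ∈ nullRankAtMost ⌊t * (n + 1 : ℕ)⌋₊ (Fin.last n) ↔
      (1 + (#{i : Fin n | (w i.castSucc).1 ≤ (w (Fin.last n)).1 ∧ (w i.castSucc).2 = true} : ℝ))
          / ((n : ℝ) + 1) ≤ t ∧ (w (Fin.last n)).2 = true := by
  refine and_congr_left fun hnull => ?_
  rw [nullRank_last _ hnull, ← natCast_div_le_iff_le_floor n.succ_pos ht]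
  push_cast
  rw [add_comm (1 : ℝ)]

/-- Validity of conformal p-values: P(p ≤ t, test point is null) ≤ t. -/
theorem conformal_pvalue_valid
    {Ω : Type*} [MeasurableSpace Ω] (μ : Measure Ω) [IsProbabilityMeasure μ]
    (n : ℕ) (W : Ω → Fin (n + 1) → ℝ × Bool) (hW : Measurable W)
    (hexch : ∀ σ : Equiv.Perm (Fin (n + 1)),
      Measure.map (fun ω => W ω ∘ σ) μ = Measure.map W μ) :
    ∀ t ∈ Set.Icc (0 : ℝ) 1,
      μ {ω | ((1 + ((Finset.univ.filter fun i : Fin n =>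
              (W ω i.castSucc).1 ≤ (W ω (Fin.last n)).1 ∧ (W ω i.castSucc).2 = true).card
            : ℝ)) / ((n : ℝ) + 1) ≤ t)
          ∧ (W ω (Fin.last n)).2 = true}
        ≤ ENNReal.ofReal t := by
  rintro t ⟨ht, -⟩
  set m := ⌊t * (n + 1 : ℕ)⌋₊
  refine (measure_mono (t := W ⁻¹' nullRankAtMost m (Fin.last n))
    fun ω hω => (mem_nullRankAtMost_last_iff (W ω) ht).2 hω).trans ?_
  refine ENNReal.le_ofReal_of_natCast_mul_le_floor n.succ_ne_zero ht ?_
  simpa only [Fintype.card_fin] using card_mul_measure_le_of_exchangeable μ hW hexch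
    (measurableSet_nullRankAtMost m) comp_perm_mem_nullRankAtMost
    (card_mem_nullRankAtMost_le m) (Fin.last n)
end

section
/- Fix integers m ≥ 1, n' ≥ 0 and let K be any {0,…,m+n'}-valued random variable. Draw X | K ~ Hypergeom(m+n', K, m). Then E[X/(1+K−X)] ≤ m/(1+n'). -/
/-!
Conditionally on `K = κ`, the identity `x * C(κ, x) = (κ - x + 1) * C(κ, x - 1)` turns
`x / (1 + κ - x) * P(X = x)` into `C(κ, x - 1) * C(N - κ, m - x) / C(N, m)`; by Vandermonde these
terms sum to at most `C(N, m - 1) / C(N, m) = m / (N - m + 1)`, which for `N = m + n'` is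
`m / (1 + n')`, independently of `κ`. Averaging over the law of `K` keeps the bound.
-/

open Finset

noncomputable def hypergeomPMF (N K m x : ℕ) : ℝ :=
  (K.choose x * (N - K).choose (m - x) : ℝ) / N.choose m

lemma Nat.add_choose_eq_sum_range (a b k : ℕ) :
    (a + b).choose k = ∑ y ∈ range (k + 1), a.choose y * b.choose (k - y) := by
  rw [Nat.add_choose_eq, Nat.sum_antidiagonal_eq_sum_range_succ_mk]

lemma succ_div_mul_choose_succ_le (κ x : ℕ) :
    ((x + 1 : ℕ) : ℝ) / (1 + κ - (x + 1 : ℕ)) * κ.choose (x + 1) ≤ κ.choose x := by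
  rcases lt_or_ge x κ with hx | hx
  · have hpos : (0 : ℝ) < κ - x := by rw [sub_pos]; exact_mod_cast hx
    have key := congrArg (Nat.cast (R := ℝ)) (Nat.choose_succ_right_eq κ x)
    push_cast [hx.le] at key
    rw [div_mul_eq_mul_div, div_le_iff₀ (by push_cast; linarith)]
    push_cast
    linarith
  · rw [Nat.choose_eq_zero_of_lt (by omega), Nat.cast_zero, mul_zero]
    positivity

lemma cast_choose_div_choose_succ {N k : ℕ} (h : k < N) :
    (N.choose k : ℝ) / N.choose (k + 1) = (k + 1) / (N - k) := by
  have hpos : (0 : ℝ) < N - k := by rw [sub_pos]; exact_mod_cast h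
  have key := congrArg (Nat.cast (R := ℝ)) (Nat.choose_succ_right_eq N k)
  push_cast [h.le] at key
  have : (0 : ℝ) < N.choose (k + 1) := by exact_mod_cast Nat.choose_pos h
  rw [div_eq_div_iff this.ne' hpos.ne']
  linarith

lemma sum_ratio_mul_hypergeomPMF_le {N κ k : ℕ} (hκ : κ ≤ N) :
    ∑ x ∈ range (min (k + 1) κ + 1),
        (x : ℝ) / (1 + κ - x) * hypergeomPMF N κ (k + 1) x
      ≤ (N.choose k : ℝ) / N.choose (k + 1) := by
  have hstep : ∀ y,
      ((y + 1 : ℕ) : ℝ) / (1 + κ - (y + 1 : ℕ)) * hypergeomPMF N κ (k + 1) (y + 1)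
      ≤ (κ.choose y * (N - κ).choose (k - y) : ℝ) / N.choose (k + 1) := by
    intro y
    have hc : 0 ≤ ((N - κ).choose (k - y) : ℝ) / N.choose (k + 1) := by positivity
    calc _ = ((y + 1 : ℕ) : ℝ) / (1 + κ - (y + 1 : ℕ)) * κ.choose (y + 1) *
          (((N - κ).choose (k - y) : ℝ) / N.choose (k + 1)) := by
            simp only [hypergeomPMF, Nat.add_sub_add_right]; ring
      _ ≤ κ.choose y * (((N - κ).choose (k - y) : ℝ) / N.choose (k + 1)) :=
            mul_le_mul_of_nonneg_right (succ_div_mul_choose_succ_le κ y) hc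
      _ = _ := by ring
  have hvandermonde : ∑ y ∈ range (k + 1), (κ.choose y * (N - κ).choose (k - y) : ℝ)
      = N.choose k := by
    rw [← Nat.add_sub_cancel' hκ, Nat.add_sub_cancel_left, Nat.add_choose_eq_sum_range]
    push_cast
    rfl
  rw [sum_range_succ']
  simp only [Nat.cast_zero, zero_div, zero_mul, add_zero]
  calc _ ≤ ∑ y ∈ range (min (k + 1) κ),
        (κ.choose y * (N - κ).choose (k - y) : ℝ) / N.choose (k + 1) :=
        sum_le_sum fun y _ => hstep y
    _ ≤ ∑ y ∈ range (k + 1),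
        (κ.choose y * (N - κ).choose (k - y) : ℝ) / N.choose (k + 1) :=
        sum_le_sum_of_subset_of_nonneg (range_subset_range.2 (min_le_left _ _))
          fun _ _ _ => by positivity
    _ = _ := by rw [← sum_div, hvandermonde]

/-- The hypergeometric ratio bound is uniform over any (random) number of successes K:
if K has an arbitrary distribution on {0,…,m+n'} and X | K ~ Hypergeom(m+n', K, m),
then E[X/(1+K−X)] ≤ m/(1+n'). -/
theorem hypergeom_ratio_expectation_le_random_K
    (m n' : ℕ) (hm : 1 ≤ m)
    (w : ℕ → ℝ) (hw : ∀ κ, 0 ≤ w κ)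
    (hsum : ∑ κ ∈ Finset.range (m + n' + 1), w κ = 1) :
    ∑ κ ∈ Finset.range (m + n' + 1), w κ *
        (∑ x ∈ Finset.range (min m κ + 1),
          ((x : ℝ) / (1 + (κ : ℝ) - (x : ℝ))) *
            (((Nat.choose κ x : ℝ) * (Nat.choose (m + n' - κ) (m - x) : ℝ)) /
              (Nat.choose (m + n') m : ℝ)))
      ≤ (m : ℝ) / (1 + (n' : ℝ)) := by
  obtain ⟨k, rfl⟩ : ∃ k, m = k + 1 := ⟨m - 1, by omega⟩
  have hratio : ((k + 1 + n').choose k : ℝ) / (k + 1 + n').choose (k + 1)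
      = ((k + 1 : ℕ) : ℝ) / (1 + n') := by
    rw [cast_choose_div_choose_succ (by omega)]
    push_cast
    ring_nf
  have hcond : ∀ κ ∈ range (k + 1 + n' + 1),
      ∑ x ∈ range (min (k + 1) κ + 1),
          (x : ℝ) / (1 + κ - x) * hypergeomPMF (k + 1 + n') κ (k + 1) x
        ≤ ((k + 1 : ℕ) : ℝ) / (1 + n') := fun κ hκ =>
    hratio ▸ sum_ratio_mul_hypergeomPMF_le (Nat.lt_succ_iff.1 (mem_range.1 hκ))
  calc _ ≤ ∑ κ ∈ range (k + 1 + n' + 1), w κ * (((k + 1 : ℕ) : ℝ) / (1 + n')) :=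
        sum_le_sum fun κ hκ => mul_le_mul_of_nonneg_left (hcond κ hκ) (hw κ)
    _ = _ := by rw [← sum_mul, hsum, one_mul]
end

section
/- Let X ~ Hypergeom(m+n', κ, m) and let X' ~ Hypergeom(m+n', κ, m−1). Then E[X/(1+κ−X)] = (m/(n'+1))·Σ_{x=max(0,κ−(n'+1))}^{min(m,κ)−1} P(X' = x). -/
open Finset

/-- Index-shift identity: E[X/(1+κ−X)] = (m/(n'+1))·Σ_{x=max(0,κ−(n'+1))}^{min(m,κ)−1} P(X' = x),
where X ~ Hypergeom(m+n', κ, m) and X' ~ Hypergeom(m+n', κ, m−1). -/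
theorem hypergeom_ratio_expectation_eq
    (m n' κ : ℕ) (hm : 1 ≤ m) (hκ : κ ≤ m + n') :
    ∑ x ∈ Finset.range (min m κ + 1),
        ((x : ℝ) / (1 + (κ : ℝ) - (x : ℝ))) *
          (((Nat.choose κ x : ℝ) * (Nat.choose (m + n' - κ) (m - x) : ℝ)) /
            (Nat.choose (m + n') m : ℝ))
      = ((m : ℝ) / ((n' : ℝ) + 1)) *
          ∑ x ∈ Finset.Ico (κ - (n' + 1)) (min m κ),
            ((Nat.choose κ x : ℝ) * (Nat.choose (m + n' - κ) (m - 1 - x) : ℝ)) /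
              (Nat.choose (m + n') (m - 1) : ℝ) := by
  have hCm : (0:ℝ) < (Nat.choose (m + n') m : ℝ) := by
    exact_mod_cast Nat.choose_pos (Nat.le_add_right _ _)
  have hCm1 : (0:ℝ) < (Nat.choose (m + n') (m-1) : ℝ) := by
    exact_mod_cast Nat.choose_pos (by omega)
  have key : ((m+n').choose m : ℝ) * m = ((m+n').choose (m-1)) * ((n':ℝ)+1) := by
    have h := Nat.choose_succ_right_eq (m+n') (m-1)
    have h1 : m - 1 + 1 = m := by omega
    have h2 : m + n' - (m-1) = n' + 1 := by omega
    rw [h1, h2] at h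
    exact_mod_cast h
  -- Step A: shift index on LHS
  have hA : ∑ x ∈ Finset.range (min m κ + 1),
        ((x : ℝ) / (1 + (κ : ℝ) - (x : ℝ))) *
          (((Nat.choose κ x : ℝ) * (Nat.choose (m + n' - κ) (m - x) : ℝ)) /
            (Nat.choose (m + n') m : ℝ))
      = ∑ x ∈ Finset.range (min m κ),
          ((Nat.choose κ x : ℝ) * (Nat.choose (m + n' - κ) (m - 1 - x) : ℝ)) /
            (Nat.choose (m + n') m : ℝ) := by
    rw [Finset.sum_range_succ']
    simp only [Nat.cast_zero, zero_div, zero_mul, add_zero]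
    apply Finset.sum_congr rfl
    intro x hx
    simp only [Finset.mem_range, lt_min_iff] at hx
    obtain ⟨hxm, hxκ⟩ := hx
    have hsub : m - (x+1) = m - 1 - x := by omega
    rw [hsub]
    have hden : (1:ℝ) + κ - (↑(x+1) : ℝ) = (κ:ℝ) - x := by push_cast; ring
    have h1 : (κ.choose (x+1) : ℝ) * (↑(x+1)) = (κ.choose x : ℝ) * ((κ:ℝ) - x) := by
      have h := Nat.choose_succ_right_eq κ x
      have : (κ.choose (x+1) * (x+1) : ℕ) = κ.choose x * (κ - x) := h
      have := congrArg (Nat.cast : ℕ → ℝ) this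
      push_cast [Nat.cast_sub hxκ.le] at this
      push_cast
      linarith [this]
    rw [hden]
    have hne : (κ:ℝ) - x ≠ 0 := by
      have : (x:ℝ) < κ := by exact_mod_cast hxκ
      linarith
    field_simp
    push_cast at h1 ⊢
    linear_combination ((Nat.choose (m+n'-κ) (m-1-x) : ℝ)) * h1
  -- Step B: extend Ico to range
  have hB : ∑ x ∈ Finset.Ico (κ - (n' + 1)) (min m κ),
            ((Nat.choose κ x : ℝ) * (Nat.choose (m + n' - κ) (m - 1 - x) : ℝ)) /
              (Nat.choose (m + n') (m - 1) : ℝ)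
      = ∑ x ∈ Finset.range (min m κ),
            ((Nat.choose κ x : ℝ) * (Nat.choose (m + n' - κ) (m - 1 - x) : ℝ)) /
              (Nat.choose (m + n') (m - 1) : ℝ) := by
    rw [Finset.range_eq_Ico, ← Finset.sum_Ico_consecutive _ (Nat.zero_le (κ - (n'+1))) (by omega : κ - (n'+1) ≤ min m κ)]
    have : ∑ x ∈ Finset.Ico 0 (κ - (n' + 1)),
            ((Nat.choose κ x : ℝ) * (Nat.choose (m + n' - κ) (m - 1 - x) : ℝ)) /
              (Nat.choose (m + n') (m - 1) : ℝ) = 0 := by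
      apply Finset.sum_eq_zero
      intro x hx
      simp only [Finset.mem_Ico] at hx
      have : Nat.choose (m + n' - κ) (m - 1 - x) = 0 :=
        Nat.choose_eq_zero_of_lt (by omega)
      rw [this]; simp
    rw [this, zero_add]
  rw [hA, hB, Finset.mul_sum]
  apply Finset.sum_congr rfl
  intro x hx
  field_simp
  linear_combination (-1 * (Nat.choose κ x : ℝ) * (Nat.choose (m+n'-κ) (m-1-x) : ℝ)) * key
end
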